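/- Let Z be a standard Gaussian random variable, μ ∈ ℝ, σ > 0, λ ∈ ℝ, and let X = μ + σ|Z|. Define C = σ · φ(σλ) / P(Z ≥ σλ), where φ(a) = exp(-a²/2)/√(2π) is the standard Gaussian density. Then the variance of X under the exponential tilting by e^{-λX} equals σ² + Cσ²λ - C²; that is, E[X²e^{-λX}]/E[e^{-λX}] - (E[Xe^{-λX}]/E[e^{-λX}])² = σ² + Cσ²λ - C². -/

import Mathlib

open MeasureTheory ProbabilityTheory Real

section aux
open Filter Set

noncomputable def gpdf (x : ℝ) : ℝ := Real.exp (-(1/2) * x ^ 2) / Real.sqrt (2 * π)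

lemma gpdf_pos (x : ℝ) : 0 < gpdf x :=
  div_pos (Real.exp_pos _) (Real.sqrt_pos.2 (by positivity))

lemma continuous_gpdf : Continuous gpdf := by
  unfold gpdf; fun_prop

lemma gaussianPDFReal_eq (x : ℝ) : gaussianPDFReal 0 1 x = gpdf x := by
  simp only [gaussianPDFReal, gpdf]
  norm_num
  rw [div_eq_mul_inv, mul_comm]
  ring_nf

lemma integrable_gpdf : Integrable gpdf :=
  (integrable_exp_neg_mul_sq (by norm_num : (0:ℝ) < 1/2)).div_const _

lemma integrable_mul_gpdf : Integrable (fun x => x * gpdf x) := by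
  have := (integrable_mul_exp_neg_mul_sq (by norm_num : (0:ℝ) < 1/2)).div_const (Real.sqrt (2 * π))
  simpa [gpdf, mul_div_assoc] using this

lemma integrable_sq_mul_gpdf : Integrable (fun x => x ^ 2 * gpdf x) := by
  have := (integrable_rpow_mul_exp_neg_mul_sq (by norm_num : (0:ℝ) < 1/2)
    (by norm_num : (-1:ℝ) < 2)).div_const (Real.sqrt (2 * π))
  have h2 : ∀ x : ℝ, x ^ (2:ℝ) = x ^ (2:ℕ) := fun x => by
    rw [← Real.rpow_natCast x 2]; norm_num
  simp only [h2] at this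
  simpa [gpdf, mul_div_assoc] using this

lemma exp_shift (a x : ℝ) :
    Real.exp (-(a * x)) * gpdf x = Real.exp (1/2 * a ^ 2) * gpdf (x + a) := by
  simp only [gpdf, div_eq_mul_inv, ← mul_assoc, ← Real.exp_add]
  congr 2
  ring

lemma shift_Ioi (H : ℝ → ℝ) (a : ℝ) :
    ∫ x in Ioi (0:ℝ), H (x + a) = ∫ u in Ioi a, H u := by
  have mp : MeasurePreserving (fun x : ℝ => x + a) volume volume :=
    measurePreserving_add_right volume a
  have emb : MeasurableEmbedding (fun x : ℝ => x + a) :=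
    (Homeomorph.addRight a).measurableEmbedding
  have := mp.setIntegral_preimage_emb emb H (Ioi a)
  have hpre : (fun x : ℝ => x + a) ⁻¹' Ioi a = Ioi 0 := by
    ext x; simp [mem_Ioi]
  rwa [hpre] at this

lemma hasDerivAt_neg_gpdf (x : ℝ) : HasDerivAt (fun u => -gpdf u) (x * gpdf x) x := by
  have h1 : HasDerivAt (fun u : ℝ => -(1/2) * u ^ 2) (-x) x := by
    have := (hasDerivAt_pow 2 x).const_mul (-(1/2) : ℝ)
    simpa using this.congr_deriv (by ring)
  have h2 := ((h1.exp.div_const (Real.sqrt (2 * π))).neg).congr_deriv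
    (show -(Real.exp (-(1/2)*x^2) * (-x) / Real.sqrt (2*π)) = x * gpdf x by
      simp [gpdf]; ring)
  exact h2

lemma hasDerivAt_gpdf (x : ℝ) : HasDerivAt gpdf (-(x * gpdf x)) x := by
  have := (hasDerivAt_neg_gpdf x).neg
  have e : (-fun u => -gpdf u) = gpdf := by ext u; simp
  rwa [e] at this

lemma tendsto_gpdf_atTop : Tendsto gpdf atTop (nhds 0) := by
  have h0 : Tendsto (fun u : ℝ => u ^ 2) atTop atTop := tendsto_pow_atTop two_ne_zero
  have h1 : Tendsto (fun u : ℝ => -(1/2) * u ^ 2) atTop atBot := by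
    apply Tendsto.const_mul_atTop_of_neg (by norm_num : (-(1/2):ℝ) < 0) h0
  have := (Real.tendsto_exp_atBot.comp h1).div_const (Real.sqrt (2 * π))
  rw [zero_div] at this
  exact this

lemma tendsto_mul_gpdf_atTop : Tendsto (fun u : ℝ => u * gpdf u) atTop (nhds 0) := by
  have hpoly : Tendsto (fun u : ℝ => u + -(1/2) * u ^ 2) atTop atBot := by
    have h : (fun u : ℝ => u + -(1/2) * u ^ 2) = fun u : ℝ => u * (1 + -(1/2) * u) := by
      funext u; ring
    rw [h]
    apply Filter.Tendsto.atTop_mul_atBot₀ tendsto_id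
    apply tendsto_atBot_add_const_left
    exact Tendsto.const_mul_atTop_of_neg (by norm_num : (-(1/2):ℝ) < 0) tendsto_id
  have hb : Tendsto (fun u : ℝ => Real.exp (u + -(1/2) * u ^ 2) / Real.sqrt (2 * π))
      atTop (nhds 0) := by
    simpa using (Real.tendsto_exp_atBot.comp hpoly).div_const (Real.sqrt (2 * π))
  apply squeeze_zero' ?_ ?_ hb
  · filter_upwards [eventually_ge_atTop (0:ℝ)] with u hu
    exact mul_nonneg hu (gpdf_pos u).le
  · filter_upwards [eventually_ge_atTop (0:ℝ)] with u hu
    rw [Real.exp_add]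
    unfold gpdf
    rw [mul_div_assoc]
    gcongr
    linarith [Real.add_one_le_exp u]

lemma J1 (a : ℝ) : ∫ u in Ioi a, u * gpdf u = gpdf a := by
  have h := integral_Ioi_of_hasDerivAt_of_tendsto
    (f := fun u => -gpdf u) (f' := fun u => u * gpdf u) (a := a)
    (continuous_gpdf.neg.continuousWithinAt)
    (fun x _ => hasDerivAt_neg_gpdf x)
    (integrable_mul_gpdf.integrableOn)
    (by simpa using tendsto_gpdf_atTop.neg)
  simpa using h

lemma J2 (a : ℝ) : ∫ u in Ioi a, u ^ 2 * gpdf u = a * gpdf a + ∫ u in Ioi a, gpdf u := by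
  have hd : ∀ x : ℝ, HasDerivAt (fun u => -(u * gpdf u)) (x ^ 2 * gpdf x - gpdf x) x := by
    intro x
    have := ((hasDerivAt_id x).mul (hasDerivAt_gpdf x)).neg
    exact this.congr_deriv (by simp only [id_eq]; ring)
  have h := integral_Ioi_of_hasDerivAt_of_tendsto
    (f := fun u => -(u * gpdf u)) (f' := fun u => u ^ 2 * gpdf u - gpdf u) (a := a)
    ((continuous_id.mul continuous_gpdf).neg.continuousWithinAt)
    (fun x _ => hd x)
    ((integrable_sq_mul_gpdf.sub integrable_gpdf).integrableOn)
    (by simpa using tendsto_mul_gpdf_atTop.neg)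
  rw [integral_sub (integrable_sq_mul_gpdf.integrableOn) (integrable_gpdf.integrableOn)] at h
  simp only [zero_sub, neg_neg] at h
  linarith

lemma tilt (p : ℝ → ℝ) (a : ℝ) :
    ∫ x in Ioi (0:ℝ), p x * (Real.exp (-(a * x)) * gpdf x)
      = Real.exp (1/2 * a ^ 2) * ∫ u in Ioi a, p (u - a) * gpdf u := by
  rw [← shift_Ioi (fun u => p (u - a) * gpdf u) a, ← integral_const_mul]
  apply setIntegral_congr_fun measurableSet_Ioi (fun x _ => ?_)
  rw [exp_shift]
  simp only [add_sub_cancel_right]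
  ring

open scoped NNReal ENNReal in
lemma integral_gaussianReal_eq (f : ℝ → ℝ) :
    ∫ z, f z ∂(gaussianReal 0 1) = ∫ z, f z * gpdf z := by
  rw [gaussianReal_of_var_ne_zero 0 one_ne_zero]
  have hd : gaussianPDF 0 1 = fun x => ((Real.toNNReal (gaussianPDFReal 0 1 x) : ℝ≥0) : ℝ≥0∞) := by
    funext x; rw [gaussianPDF, ENNReal.ofReal]
  rw [hd, integral_withDensity_eq_integral_smul
    ((measurable_gaussianPDFReal 0 1).real_toNNReal) f]
  congr 1; funext x
  rw [NNReal.smul_def, smul_eq_mul, Real.coe_toNNReal _ (gaussianPDFReal_nonneg 0 1 x),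
    gaussianPDFReal_eq, mul_comm]

lemma measure_Ici_toReal (a : ℝ) :
    ((gaussianReal 0 1) {z : ℝ | a ≤ z}).toReal = ∫ u in Ioi a, gpdf u := by
  have hset : {z : ℝ | a ≤ z} = Ici a := rfl
  rw [hset, gaussianReal_apply_eq_integral 0 one_ne_zero,
    ENNReal.toReal_ofReal (integral_nonneg (fun x => gaussianPDFReal_nonneg 0 1 x))]
  simp_rw [gaussianPDFReal_eq]
  rw [integral_Ici_eq_integral_Ioi]

lemma P_pos (a : ℝ) : 0 < ∫ u in Ioi a, gpdf u := by
  rw [setIntegral_pos_iff_support_of_nonneg_ae (ae_of_all _ fun x => (gpdf_pos x).le)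
    integrable_gpdf.integrableOn]
  have hs : Function.support gpdf ∩ Ioi a = Ioi a := by
    ext x; simp [Function.support, (gpdf_pos x).ne']
  rw [hs, Real.volume_Ioi]
  exact ENNReal.zero_lt_top

end aux

/-- For `Z ~ N(0,1)`, `σ > 0`, `X = μ + σ|Z|`, and
`C = σ·φ(σλ)/P(Z ≥ σλ)` with `φ(a) = exp(-a²/2)/√(2π)`, the tilted variance of `X` is
`E[X²e^{-λX}]/E[e^{-λX}] - (E[Xe^{-λX}]/E[e^{-λX}])² = σ² + Cσ²λ - C²`. -/
theorem halfNormal_tilted_variance (μ σ lam C : ℝ) (hσ : 0 < σ)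
    (hC : C = σ * (Real.exp (-(σ * lam) ^ 2 / 2) / Real.sqrt (2 * π)) /
      ((gaussianReal 0 1) {z : ℝ | σ * lam ≤ z}).toReal) :
    (∫ z, (μ + σ * |z|) ^ 2 * Real.exp (-(lam * (μ + σ * |z|))) ∂(gaussianReal 0 1)) /
        (∫ z, Real.exp (-(lam * (μ + σ * |z|))) ∂(gaussianReal 0 1)) -
      ((∫ z, (μ + σ * |z|) * Real.exp (-(lam * (μ + σ * |z|))) ∂(gaussianReal 0 1)) /
        (∫ z, Real.exp (-(lam * (μ + σ * |z|))) ∂(gaussianReal 0 1))) ^ 2 =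
      σ ^ 2 + C * σ ^ 2 * lam - C ^ 2 := by
  classical
  set a : ℝ := σ * lam with ha
  set P : ℝ := ∫ u in Set.Ioi a, gpdf u with hPdef
  set G : ℝ := gpdf a with hGdef
  have hP : 0 < P := P_pos a
  have hgabs : ∀ z : ℝ, gpdf |z| = gpdf z := fun z => by simp [gpdf, sq_abs]
  have hexp : ∀ x : ℝ, Real.exp (-(lam * (μ + σ * x)))
      = Real.exp (-(lam * μ)) * Real.exp (-(a * x)) := by
    intro x; rw [← Real.exp_add]; congr 1; ring
  set E1 : ℝ := Real.exp (-(lam * μ)) with hE1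
  set E2 : ℝ := Real.exp (1/2 * a ^ 2) with hE2
  -- denominator
  have hN : (∫ z, Real.exp (-(lam * (μ + σ * |z|))) ∂(gaussianReal 0 1))
      = 2 * E1 * (E2 * P) := by
    rw [integral_gaussianReal_eq]
    have h1 : ∫ z : ℝ, Real.exp (-(lam * (μ + σ * |z|))) * gpdf z
        = 2 * ∫ x in Set.Ioi (0:ℝ), Real.exp (-(lam * (μ + σ * x))) * gpdf x := by
      rw [← integral_comp_abs (f := fun x => Real.exp (-(lam * (μ + σ * x))) * gpdf x)]
      congr 1; funext z; rw [hgabs]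
    rw [h1]
    have h2 : ∫ x in Set.Ioi (0:ℝ), Real.exp (-(lam * (μ + σ * x))) * gpdf x
        = E1 * ∫ x in Set.Ioi (0:ℝ), (fun _ => (1:ℝ)) x * (Real.exp (-(a * x)) * gpdf x) := by
      rw [← integral_const_mul]
      apply setIntegral_congr_fun measurableSet_Ioi (fun x _ => ?_)
      rw [hexp]; ring
    rw [h2, tilt (fun _ => (1:ℝ)) a]
    simp only [one_mul]
    ring
  -- first moment
  have hR1 : (∫ u in Set.Ioi a, (μ + σ * (u - a)) * gpdf u) = (μ - σ * a) * P + σ * G := by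
    have hpt : ∀ u : ℝ, (μ + σ * (u - a)) * gpdf u
        = (μ - σ * a) * gpdf u + σ * (u * gpdf u) := fun u => by ring
    simp_rw [hpt]
    rw [integral_add ((integrable_gpdf.integrableOn).const_mul _)
      ((integrable_mul_gpdf.integrableOn).const_mul _),
      integral_const_mul, integral_const_mul, J1]
  have hM1 : (∫ z, (μ + σ * |z|) * Real.exp (-(lam * (μ + σ * |z|))) ∂(gaussianReal 0 1))
      = 2 * E1 * (E2 * ((μ - σ * a) * P + σ * G)) := by
    rw [integral_gaussianReal_eq]
    have h1 : ∫ z : ℝ, (μ + σ * |z|) * Real.exp (-(lam * (μ + σ * |z|))) * gpdf z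
        = 2 * ∫ x in Set.Ioi (0:ℝ), (μ + σ * x) * Real.exp (-(lam * (μ + σ * x))) * gpdf x := by
      rw [← integral_comp_abs (f := fun x => (μ + σ * x) * Real.exp (-(lam * (μ + σ * x))) * gpdf x)]
      congr 1; funext z; rw [hgabs]
    rw [h1]
    have h2 : ∫ x in Set.Ioi (0:ℝ), (μ + σ * x) * Real.exp (-(lam * (μ + σ * x))) * gpdf x
        = E1 * ∫ x in Set.Ioi (0:ℝ), (fun y => μ + σ * y) x * (Real.exp (-(a * x)) * gpdf x) := by
      rw [← integral_const_mul]
      apply setIntegral_congr_fun measurableSet_Ioi (fun x _ => ?_)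
      rw [hexp]; ring
    rw [h2, tilt (fun y => μ + σ * y) a, hR1]
    ring
  -- second moment
  have hR2 : (∫ u in Set.Ioi a, (μ + σ * (u - a)) ^ 2 * gpdf u)
      = (μ - σ * a) ^ 2 * P + 2 * (μ - σ * a) * σ * G + σ ^ 2 * (a * G + P) := by
    have hpt : ∀ u : ℝ, (μ + σ * (u - a)) ^ 2 * gpdf u
        = (μ - σ * a) ^ 2 * gpdf u + (2 * (μ - σ * a) * σ) * (u * gpdf u)
          + σ ^ 2 * (u ^ 2 * gpdf u) := fun u => by ring
    simp_rw [hpt]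
    have i12 : IntegrableOn (fun u : ℝ => (μ - σ * a) ^ 2 * gpdf u
        + 2 * (μ - σ * a) * σ * (u * gpdf u)) (Set.Ioi a) := by
      exact ((integrable_gpdf.integrableOn).const_mul _).add
        ((integrable_mul_gpdf.integrableOn).const_mul _)
    rw [integral_add i12 ((integrable_sq_mul_gpdf.integrableOn).const_mul _),
      integral_add ((integrable_gpdf.integrableOn).const_mul _)
        ((integrable_mul_gpdf.integrableOn).const_mul _),
      integral_const_mul, integral_const_mul, integral_const_mul, J1, J2]
  have hM2 : (∫ z, (μ + σ * |z|) ^ 2 * Real.exp (-(lam * (μ + σ * |z|))) ∂(gaussianReal 0 1))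
      = 2 * E1 * (E2 * ((μ - σ * a) ^ 2 * P + 2 * (μ - σ * a) * σ * G + σ ^ 2 * (a * G + P))) := by
    rw [integral_gaussianReal_eq]
    have h1 : ∫ z : ℝ, (μ + σ * |z|) ^ 2 * Real.exp (-(lam * (μ + σ * |z|))) * gpdf z
        = 2 * ∫ x in Set.Ioi (0:ℝ), (μ + σ * x) ^ 2 * Real.exp (-(lam * (μ + σ * x))) * gpdf x := by
      rw [← integral_comp_abs (f := fun x => (μ + σ * x) ^ 2 * Real.exp (-(lam * (μ + σ * x))) * gpdf x)]
      congr 1; funext z; rw [hgabs]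
    rw [h1]
    have h2 : ∫ x in Set.Ioi (0:ℝ), (μ + σ * x) ^ 2 * Real.exp (-(lam * (μ + σ * x))) * gpdf x
        = E1 * ∫ x in Set.Ioi (0:ℝ),
            (fun y => (μ + σ * y) ^ 2) x * (Real.exp (-(a * x)) * gpdf x) := by
      rw [← integral_const_mul]
      apply setIntegral_congr_fun measurableSet_Ioi (fun x _ => ?_)
      rw [hexp]; ring
    rw [h2, tilt (fun y => (μ + σ * y) ^ 2) a, hR2]
    ring
  -- C in terms of G and P
  have hC' : C = σ * G / P := by
    rw [hC, measure_Ici_toReal]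
    congr 2
    rw [hGdef, gpdf]
    congr 2
    ring
  rw [hN, hM1, hM2, hC']
  have hE1p : (0:ℝ) < E1 := Real.exp_pos _
  have hE2p : (0:ℝ) < E2 := Real.exp_pos _
  have hKne : 2 * E1 ≠ 0 := by positivity
  field_simp
  ring
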